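/- Incompleteness of support in a finite signature with infinitely many forced constants: if the language contains infinitely many constants c₀, c₁, c₂, … and T is a theory (e.g., PA in this expanded signature), then there exists a consistent base B supporting all axioms of T together with each atomic sentence cᵢ = 0, such that B supports equations not derivable in T; hence the Δ₀-transfer property (supported Δ₀-sentences are T-derivable) fails for such B. -/

import Mathlib

namespace PTS

/-- An atomic rule: finitely many atomic premises and an atomic conclusion. -/
structure ARule (Atom : Type) where
  prems : List Atom
  concl : Atom

/-- A base is a set of atomic rules. -/
abbrev Base (Atom : Type) := Set (ARule Atom)

/-- Atomic derivability from a base. -/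
inductive ADeriv {Atom : Type} (B : Base Atom) : Atom → Prop
  | app (r : ARule Atom) (hr : r ∈ B) (h : ∀ p ∈ r.prems, ADeriv B p) : ADeriv B r.concl

/-- Terms of arithmetic (signature ⟨0,S,+,×⟩, with extra constants from `C`),
with de Bruijn variables. -/
inductive Tm (C : Type) : Type
  | var : ℕ → Tm C
  | const : C → Tm C
  | zero : Tm C
  | succ : Tm C → Tm C
  | add : Tm C → Tm C → Tm C
  | mul : Tm C → Tm C → Tm C

variable {C : Type}

def Tm.subst : Tm C → (ℕ → Tm C) → Tm C
  | .var n, σ => σ n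
  | .const c, _ => .const c
  | .zero, _ => .zero
  | .succ t, σ => .succ (t.subst σ)
  | .add t s, σ => .add (t.subst σ) (s.subst σ)
  | .mul t s, σ => .mul (t.subst σ) (s.subst σ)

def Tm.liftBy (t : Tm C) (k : ℕ) : Tm C := t.subst fun n => .var (n + k)

def Tm.lift (t : Tm C) : Tm C := t.liftBy 1

/-- A term is closed when it contains no variables. -/
def Tm.Closed : Tm C → Prop
  | .var _ => False
  | .const _ => True
  | .zero => True
  | .succ t => t.Closed
  | .add t s => t.Closed ∧ s.Closed
  | .mul t s => t.Closed ∧ s.Closed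

/-- Formulas with primitives →, ∧, ∀, ⊥ and atomic equations. -/
inductive Fm (C : Type) : Type
  | eq : Tm C → Tm C → Fm C
  | falsum : Fm C
  | imp : Fm C → Fm C → Fm C
  | and : Fm C → Fm C → Fm C
  | all : Fm C → Fm C

def liftSub (σ : ℕ → Tm C) : ℕ → Tm C
  | 0 => .var 0
  | n + 1 => (σ n).lift

def Fm.subst : Fm C → (ℕ → Tm C) → Fm C
  | .eq t s, σ => .eq (t.subst σ) (s.subst σ)
  | .falsum, _ => .falsum
  | .imp φ ψ, σ => .imp (φ.subst σ) (ψ.subst σ)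
  | .and φ ψ, σ => .and (φ.subst σ) (ψ.subst σ)
  | .all φ, σ => .all (φ.subst (liftSub σ))

def sub0 (t : Tm C) : ℕ → Tm C
  | 0 => t
  | n + 1 => .var n

/-- Instantiation of the outermost bound variable: `φ[x₀ ↦ t]`. -/
def Fm.inst (φ : Fm C) (t : Tm C) : Fm C := φ.subst (sub0 t)

def Fm.neg (φ : Fm C) : Fm C := φ.imp .falsum
def Fm.or (φ ψ : Fm C) : Fm C := (φ.neg.and ψ.neg).neg
def Fm.ex (φ : Fm C) : Fm C := (Fm.all φ.neg).neg
def Fm.lift1 (φ : Fm C) : Fm C := φ.subst fun n => .var (n + 1)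

/-- `a < b`, expressed arithmetically as ∃y (S(a + y) = b). -/
def ltF (a b : Tm C) : Fm C := Fm.ex (.eq (.succ (.add a.lift (.var 0))) b.lift)

def Tm.VarsLt : Tm C → ℕ → Prop
  | .var k, n => k < n
  | .const _, _ => True
  | .zero, _ => True
  | .succ t, n => t.VarsLt n
  | .add t s, n => t.VarsLt n ∧ s.VarsLt n
  | .mul t s, n => t.VarsLt n ∧ s.VarsLt n

def Fm.ClosedUnder : Fm C → ℕ → Prop
  | .eq t s, n => t.VarsLt n ∧ s.VarsLt n
  | .falsum, _ => True
  | .imp φ ψ, n => φ.ClosedUnder n ∧ ψ.ClosedUnder n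
  | .and φ ψ, n => φ.ClosedUnder n ∧ ψ.ClosedUnder n
  | .all φ, n => φ.ClosedUnder (n + 1)

/-- A sentence is a formula with no free variables. -/
def Fm.Sentence (φ : Fm C) : Prop := φ.ClosedUnder 0

def liftCtx (Γ : Set (Fm C)) : Set (Fm C) := Fm.lift1 '' Γ

/-- Classical natural deduction for first-order logic with equality. -/
inductive Prv : Set (Fm C) → Fm C → Prop
  | ax {Γ : Set (Fm C)} {φ} : φ ∈ Γ → Prv Γ φ
  | impI {Γ : Set (Fm C)} {φ ψ : Fm C} : Prv (insert φ Γ) ψ → Prv Γ (φ.imp ψ)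
  | impE {Γ : Set (Fm C)} {φ ψ : Fm C} : Prv Γ (φ.imp ψ) → Prv Γ φ → Prv Γ ψ
  | andI {Γ : Set (Fm C)} {φ ψ : Fm C} : Prv Γ φ → Prv Γ ψ → Prv Γ (φ.and ψ)
  | andE1 {Γ : Set (Fm C)} {φ ψ : Fm C} : Prv Γ (φ.and ψ) → Prv Γ φ
  | andE2 {Γ : Set (Fm C)} {φ ψ : Fm C} : Prv Γ (φ.and ψ) → Prv Γ ψ
  | allI {Γ : Set (Fm C)} {φ : Fm C} : Prv (liftCtx Γ) φ → Prv Γ (.all φ)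
  | allE {Γ : Set (Fm C)} {φ : Fm C} (t : Tm C) : Prv Γ (.all φ) → Prv Γ (φ.inst t)
  | byContra {Γ : Set (Fm C)} {φ : Fm C} : Prv (insert φ.neg Γ) .falsum → Prv Γ φ
  | eqRefl {Γ : Set (Fm C)} (t : Tm C) : Prv Γ (.eq t t)
  | eqSubst {Γ : Set (Fm C)} (φ : Fm C) (t s : Tm C) :
      Prv Γ (.eq t s) → Prv Γ (φ.inst t) → Prv Γ (φ.inst s)

/-- Numerals. -/
def num : ℕ → Tm C
  | 0 => .zero
  | n + 1 => .succ (num n)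

def consE (n : ℕ) (e : ℕ → ℕ) : ℕ → ℕ
  | 0 => n
  | k + 1 => e k

/-- Evaluation of terms in the standard model ℕ. -/
def Tm.val (ι : C → ℕ) (e : ℕ → ℕ) : Tm C → ℕ
  | .var n => e n
  | .const c => ι c
  | .zero => 0
  | .succ t => t.val ι e + 1
  | .add t s => t.val ι e + s.val ι e
  | .mul t s => t.val ι e * s.val ι e

/-- Truth in the standard model ℕ. -/
def Fm.Val (ι : C → ℕ) (e : ℕ → ℕ) : Fm C → Prop
  | .eq t s => t.val ι e = s.val ι e
  | .falsum => False
  | .imp φ ψ => φ.Val ι e → ψ.Val ι e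
  | .and φ ψ => φ.Val ι e ∧ ψ.Val ι e
  | .all φ => ∀ n : ℕ, φ.Val ι (consE n e)

/-- Δ₀ formulas: built from equations and ⊥ by ∧, → and bounded universal
quantification ∀x (x < t → φ) with t not containing x. -/
inductive Delta0 : Fm C → Prop
  | eq (t s : Tm C) : Delta0 (.eq t s)
  | falsum : Delta0 .falsum
  | imp {φ ψ : Fm C} : Delta0 φ → Delta0 ψ → Delta0 (φ.imp ψ)
  | and {φ ψ : Fm C} : Delta0 φ → Delta0 ψ → Delta0 (φ.and ψ)
  | ball {φ : Fm C} (t : Tm C) : Delta0 φ → Delta0 (.all ((ltF (.var 0) t.lift).imp φ))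

/-- The axioms of Robinson arithmetic Q. -/
def QAx : Set (Fm C) :=
  { .all ((Fm.eq (.succ (.var 0)) .zero).neg),
    .all (.all ((Fm.eq (.succ (.var 1)) (.succ (.var 0))).imp (.eq (.var 1) (.var 0)))),
    .all (((Fm.eq (.var 0) .zero).neg).imp (Fm.ex (.eq (.var 1) (.succ (.var 0))))),
    .all (.eq (.add (.var 0) .zero) (.var 0)),
    .all (.all (.eq (.add (.var 1) (.succ (.var 0))) (.succ (.add (.var 1) (.var 0))))),
    .all (.eq (.mul (.var 0) .zero) .zero),
    .all (.all (.eq (.mul (.var 1) (.succ (.var 0))) (.add (.mul (.var 1) (.var 0)) (.var 1)))) }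

/-- The induction axiom for φ. -/
def indAx (φ : Fm C) : Fm C :=
  ((φ.inst .zero).and
      (.all (φ.imp (φ.subst fun n => match n with
        | 0 => .succ (.var 0)
        | k + 1 => .var (k + 1))))).imp (.all φ)

/-- The axioms of Peano arithmetic. -/
def PAAx : Set (Fm C) :=
  ({ .all ((Fm.eq (.succ (.var 0)) .zero).neg),
     .all (.all ((Fm.eq (.succ (.var 1)) (.succ (.var 0))).imp (.eq (.var 1) (.var 0)))),
     .all (.eq (.add (.var 0) .zero) (.var 0)),
     .all (.all (.eq (.add (.var 1) (.succ (.var 0))) (.succ (.add (.var 1) (.var 0))))),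
     .all (.eq (.mul (.var 0) .zero) .zero),
     .all (.all (.eq (.mul (.var 1) (.succ (.var 0))) (.add (.mul (.var 1) (.var 0)) (.var 1)))) }
    : Set (Fm C)) ∪ Set.range indAx

/-- Bases over arithmetic: atoms are (closed) equations, coded as pairs of terms. -/
abbrev ABase (C : Type) := Base (Tm C × Tm C)

def Fm.depth : Fm C → ℕ
  | .eq _ _ => 0
  | .falsum => 0
  | .imp φ ψ => max φ.depth ψ.depth + 1
  | .and φ ψ => max φ.depth ψ.depth + 1
  | .all φ => φ.depth + 1

theorem Fm.depth_subst (φ : Fm C) (σ : ℕ → Tm C) : (φ.subst σ).depth = φ.depth := by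
  induction φ generalizing σ <;> simp [Fm.subst, Fm.depth, *]

/-- The support relation for arithmetic formulas: atoms via atomic derivability,
∧ componentwise, → over all base extensions, ∀ over all closed-term instances,
⊥ iff every closed atom is supported. -/
def Spt (B : ABase C) : Fm C → Prop
  | .eq t s => ADeriv B (t, s)
  | .falsum => ∀ a : Tm C × Tm C, ADeriv B a
  | .imp φ ψ => ∀ D : ABase C, B ⊆ D → Spt D φ → Spt D ψ
  | .and φ ψ => Spt B φ ∧ Spt B ψ
  | .all φ => ∀ t : Tm C, t.Closed → Spt B (φ.inst t)
termination_by φ => φ.depth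
decreasing_by all_goals simp [Fm.depth, Fm.inst, Fm.depth_subst] <;> omega

/-- Support consequence: Γ ⊩ φ. -/
def EntailsA (Γ : Set (Fm C)) (φ : Fm C) : Prop :=
  ∀ B : ABase C, (∀ ψ ∈ Γ, Spt B ψ) → Spt B φ

/-- A consistent base. -/
def ConsistentA (B : ABase C) : Prop := ¬ Spt B (Fm.falsum : Fm C)

/-- A sufficiently strong arithmetical theory. -/
structure SuffStrong (A : Set (Fm C)) : Prop where
  num_iff : ∀ m n : ℕ, Prv A (.eq (num m) (num n)) ↔ m = n
  delta0_dec : ∀ φ : Fm C, Delta0 φ → φ.Sentence → Prv A φ ∨ Prv A φ.neg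

end PTS

open PTS

/-!
Let `B` be the base of the standard model in which every constant denotes `0`: a premise-free
rule for each true equation (among them every `cᵢ = 0`) and a rule deriving anything from each
false one. By induction on formulas, support in any consistent extension of `B` coincides with
truth in this model; for `→` this works because an extension that derives a false equation
supports everything. Hence `B` is consistent and supports the axioms of PA and `c₁ = 0`, while
soundness in the model where `c₁` denotes `1` shows that PA does not prove `c₁ = 0`.
-/

namespace PTS

variable {C : Type}

theorem ADeriv.mono {Atom : Type} {B D : Base Atom} (hBD : B ⊆ D) {a : Atom}
    (h : ADeriv B a) : ADeriv D a := by
  induction h with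
  | app r hr _ ih => exact .app r (hBD hr) ih

theorem Spt.of_falsum : ∀ (φ : Fm C) {D : ABase C}, Spt D .falsum → Spt D φ
  | .eq t s, D, h => by rw [Spt] at h; rw [Spt]; exact h (t, s)
  | .falsum, _, h => h
  | .imp _ ψ, D, h => by
    rw [Spt] at h
    rw [Spt]
    exact fun D' hDD' _ => Spt.of_falsum ψ (by rw [Spt]; exact fun a => (h a).mono hDD')
  | .and φ ψ, _, h => by rw [Spt]; exact ⟨Spt.of_falsum φ h, Spt.of_falsum ψ h⟩
  | .all φ, _, h => by rw [Spt]; exact fun t _ => Spt.of_falsum (φ.inst t) h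
termination_by φ => φ.depth
decreasing_by all_goals simp [Fm.depth, Fm.inst, Fm.depth_subst]

section Semantics

variable (ι : C → ℕ)

theorem Tm.val_subst (e : ℕ → ℕ) (t : Tm C) (σ : ℕ → Tm C) :
    (t.subst σ).val ι e = t.val ι (fun n => (σ n).val ι e) := by
  induction t <;> simp [Tm.subst, Tm.val, *]

theorem val_liftSub (e : ℕ → ℕ) (n : ℕ) (σ : ℕ → Tm C) :
    (fun k => (liftSub σ k).val ι (consE n e)) = consE n (fun k => (σ k).val ι e) := by
  funext k
  cases k with
  | zero => rfl
  | succ k => rw [liftSub, Tm.lift, Tm.liftBy, Tm.val_subst]; rfl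

theorem Fm.val_subst (φ : Fm C) (e : ℕ → ℕ) (σ : ℕ → Tm C) :
    (φ.subst σ).Val ι e ↔ φ.Val ι (fun n => (σ n).val ι e) := by
  induction φ generalizing e σ with
  | all φ ih => exact forall_congr' fun n => by rw [ih, val_liftSub]
  | _ => simp [Fm.subst, Fm.Val, Tm.val_subst, *]

theorem Fm.val_inst (φ : Fm C) (e : ℕ → ℕ) (t : Tm C) :
    (φ.inst t).Val ι e ↔ φ.Val ι (consE (t.val ι e) e) := by
  have hsub : (fun k => (sub0 t k).val ι e) = consE (t.val ι e) e :=
    funext fun k => by cases k <;> rfl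
  rw [Fm.inst, Fm.val_subst, hsub]

theorem Fm.val_lift1 (φ : Fm C) (n : ℕ) (e : ℕ → ℕ) :
    φ.lift1.Val ι (consE n e) ↔ φ.Val ι e := by
  rw [Fm.lift1, Fm.val_subst]
  rfl

theorem Prv.sound {Γ : Set (Fm C)} {φ : Fm C} (h : Prv Γ φ) (e : ℕ → ℕ)
    (hΓ : ∀ ψ ∈ Γ, ψ.Val ι e) : φ.Val ι e := by
  induction h generalizing e with
  | ax hφ => exact hΓ _ hφ
  | impI _ ih => exact fun hφ => ih e (Set.forall_mem_insert.2 ⟨hφ, hΓ⟩)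
  | impE _ _ ih₁ ih₂ => exact ih₁ e hΓ (ih₂ e hΓ)
  | andI _ _ ih₁ ih₂ => exact ⟨ih₁ e hΓ, ih₂ e hΓ⟩
  | andE1 _ ih => exact (ih e hΓ).1
  | andE2 _ ih => exact (ih e hΓ).2
  | allI _ ih =>
    exact fun n => ih _ (Set.forall_mem_image.2 fun ψ hψ => (Fm.val_lift1 ι ψ n e).2 (hΓ ψ hψ))
  | allE t _ ih => exact (Fm.val_inst ι _ e t).2 (ih e hΓ _)
  | byContra _ ih => exact by_contra fun hn => ih e (Set.forall_mem_insert.2 ⟨hn, hΓ⟩)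
  | eqRefl t => rfl
  | eqSubst φ t s _ _ ih₁ ih₂ =>
    have hts : t.val ι e = s.val ι e := ih₁ e hΓ
    have h := (Fm.val_inst ι φ e t).1 (ih₂ e hΓ)
    rw [hts] at h
    exact (Fm.val_inst ι φ e s).2 h

theorem val_indAx (e : ℕ → ℕ) (φ : Fm C) : (indAx φ).Val ι e := by
  rintro ⟨h0, hs⟩ n
  induction n with
  | zero => exact (Fm.val_inst ι φ e .zero).1 h0
  | succ n ih =>
    have h := (Fm.val_subst ι φ _ _).1 (hs n ih)
    convert h using 2 with k
    cases k <;> rfl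

theorem val_of_mem_PAAx (e : ℕ → ℕ) {α : Fm C} (hα : α ∈ PAAx) : α.Val ι e := by
  rcases hα with h | ⟨φ, rfl⟩
  · simp only [Set.mem_insert_iff, Set.mem_singleton_iff] at h
    rcases h with rfl | rfl | rfl | rfl | rfl | rfl <;>
      simp [Fm.Val, Fm.neg, Tm.val, consE, Nat.mul_succ]; omega
  · exact val_indAx ι e φ

theorem num_closed : ∀ n : ℕ, (num n : Tm C).Closed
  | 0 => trivial
  | n + 1 => num_closed n

theorem val_num (e : ℕ → ℕ) : ∀ n : ℕ, (num n : Tm C).val ι e = n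
  | 0 => rfl
  | n + 1 => congrArg (· + 1) (val_num e n)

end Semantics

section ModelBase

variable (ι : C → ℕ) (e : ℕ → ℕ)

/-- The base of the model `(ℕ, ι)` under the assignment `e`: true equations are axioms and a
false equation derives every atom. -/
def modelBase : ABase C :=
  {r | r.prems = [] ∧ r.concl.1.val ι e = r.concl.2.val ι e} ∪
  {r | ∃ a : Tm C × Tm C, r.prems = [a] ∧ a.1.val ι e ≠ a.2.val ι e}

variable {ι e}

theorem ADeriv.val_eq_of_modelBase {a : Tm C × Tm C} (h : ADeriv (modelBase ι e) a) :
    a.1.val ι e = a.2.val ι e := by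
  induction h with
  | app r hr _ ih =>
    rcases hr with ⟨_, htrue⟩ | ⟨a, hprems, hfalse⟩
    · exact htrue
    · exact absurd (ih a (by simp [hprems])) hfalse

theorem ADeriv.of_modelBase_subset {D : ABase C} (hD : modelBase ι e ⊆ D) {t s : Tm C}
    (h : t.val ι e = s.val ι e) : ADeriv D (t, s) :=
  .app ⟨[], (t, s)⟩ (hD (Or.inl ⟨rfl, h⟩)) (by simp)

theorem spt_falsum_of_modelBase_subset {D : ABase C} (hD : modelBase ι e ⊆ D) {t s : Tm C}
    (hts : t.val ι e ≠ s.val ι e) (h : ADeriv D (t, s)) : Spt D .falsum := by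
  rw [Spt]
  exact fun a => .app ⟨[(t, s)], a⟩ (hD (Or.inr ⟨(t, s), rfl, hts⟩)) (by simpa using h)

theorem consistentA_modelBase : ConsistentA (modelBase ι e) := by
  intro h
  rw [Spt] at h
  exact Nat.succ_ne_zero _ (h (.succ .zero, .zero)).val_eq_of_modelBase

theorem spt_iff_val_of_modelBase_subset : ∀ (φ : Fm C) {D : ABase C},
    modelBase ι e ⊆ D → ¬ Spt D .falsum → (Spt D φ ↔ φ.Val ι e)
  | .eq t s, D, hD, hcons => by
    rw [Spt]
    exact ⟨fun h => by_contra fun hts => hcons (spt_falsum_of_modelBase_subset hD hts h),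
      ADeriv.of_modelBase_subset hD⟩
  | .falsum, _, _, hcons => iff_of_false hcons id
  | .imp φ ψ, D, hD, hcons => by
    rw [Spt]
    refine ⟨fun h hφ => (spt_iff_val_of_modelBase_subset ψ hD hcons).1
      (h D le_rfl ((spt_iff_val_of_modelBase_subset φ hD hcons).2 hφ)), fun h D' hDD' hφ => ?_⟩
    -- an extension `D'` may be inconsistent, and then it supports `ψ` outright
    by_cases hcons' : Spt D' .falsum
    · exact Spt.of_falsum ψ hcons'
    · have hD' := hD.trans hDD'
      exact (spt_iff_val_of_modelBase_subset ψ hD' hcons').2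
        (h ((spt_iff_val_of_modelBase_subset φ hD' hcons').1 hφ))
  | .and φ ψ, D, hD, hcons => by
    rw [Spt, spt_iff_val_of_modelBase_subset φ hD hcons,
      spt_iff_val_of_modelBase_subset ψ hD hcons]
    rfl
  | .all φ, D, hD, hcons => by
    rw [Spt]
    constructor
    · intro h n
      have hn := (spt_iff_val_of_modelBase_subset (φ.inst (num n)) hD hcons).1
        (h _ (num_closed n))
      rwa [Fm.val_inst, val_num] at hn
    · exact fun h t _ => (spt_iff_val_of_modelBase_subset (φ.inst t) hD hcons).2
        ((Fm.val_inst ι φ e t).2 (h _))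
termination_by φ => φ.depth
decreasing_by all_goals simp [Fm.depth, Fm.inst, Fm.depth_subst]

theorem spt_modelBase_iff (φ : Fm C) : Spt (modelBase ι e) φ ↔ φ.Val ι e :=
  spt_iff_val_of_modelBase_subset φ le_rfl consistentA_modelBase

end ModelBase

theorem not_prv_PAAx_const_eq_zero {c : C} : ¬ Prv PAAx (Fm.eq (.const c) .zero) := by
  classical
  intro h
  simpa [Fm.Val, Tm.val] using
    h.sound (fun d => if d = c then 1 else 0) 0 fun _ => val_of_mem_PAAx _ _

end PTS

theorem support_incomplete_with_forced_constants :
    ∃ B : ABase ℕ, ConsistentA B ∧ (∀ α ∈ (PAAx : Set (Fm ℕ)), Spt B α) ∧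
      (∀ i : ℕ, Spt B (Fm.eq (.const i) .zero)) ∧
      Spt B (Fm.eq (.const 1) .zero) ∧ ¬ Prv (PAAx : Set (Fm ℕ)) (Fm.eq (.const 1) .zero) ∧
      ∃ δ : Fm ℕ, Delta0 δ ∧ δ.Sentence ∧ Spt B δ ∧ ¬ Prv (PAAx : Set (Fm ℕ)) δ := by
  let B : ABase ℕ := modelBase 0 0
  have hconst (i : ℕ) : Spt B (Fm.eq (.const i) .zero) := spt_modelBase_iff _ |>.2 rfl
  refine ⟨B, consistentA_modelBase, fun α hα => spt_modelBase_iff α |>.2 (val_of_mem_PAAx 0 0 hα),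
    hconst, hconst 1, not_prv_PAAx_const_eq_zero,
    Fm.eq (.const 1) .zero, .eq _ _, ⟨trivial, trivial⟩, hconst 1, not_prv_PAAx_const_eq_zero⟩
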